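/- In a simple graph whose edges are each colored red, green, or blue, with R red edges, G green edges, B blue edges, and T rainbow triangles (triangles with one edge of each color), one has T^2 ≤ 2·R·G·B. -/

import Mathlib

/-!
Orient each rainbow triangle as a red dart `(a, b)` together with the vertex `v` for which
`bv` is green and `av` is blue; this is a bijection. There are `2R` red darts, so grouping the
`T` oriented triangles by their red dart, Cauchy–Schwarz gives `T² ≤ 2R · N`, where `N` counts
pairs `(a, b, v)`, `(a, b, v')` on a common red dart. Such a pair is determined by the green
edge `bv` and the blue edge `av'`, hence `N ≤ G · B`.
-/

/-- A triangle (as a 3-element vertex set) is rainbow: pairwise adjacent with three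
distinct edge colors. -/
def Rainbow {V : Type*} [DecidableEq V] (G : SimpleGraph V) (c : Sym2 V → Fin 3) (t : Finset V) : Prop :=
  ∃ a b d : V, t = {a, b, d} ∧ G.Adj a b ∧ G.Adj b d ∧ G.Adj a d ∧
    c s(a, b) ≠ c s(b, d) ∧ c s(b, d) ≠ c s(a, d) ∧ c s(a, b) ≠ c s(a, d)

open Finset

theorem card_sq_le_card_mul_card_filter_product_eq {α β : Type*} [DecidableEq β]
    {s : Finset α} {t : Finset β} {f : α → β} (hf : ∀ x ∈ s, f x ∈ t) :
    #s ^ 2 ≤ #t * #{p ∈ s ×ˢ s | f p.1 = f p.2} := by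
  classical
  calc #s ^ 2 = (∑ b ∈ t, #{x ∈ s | f x = b}) ^ 2 := by rw [card_eq_sum_card_fiberwise hf]
    _ ≤ #t * ∑ b ∈ t, #{x ∈ s | f x = b} ^ 2 := sq_sum_le_card_mul_sum_sq
    _ = #t * #{p ∈ s ×ˢ s | f p.1 = f p.2} := by
      rw [card_eq_sum_card_fiberwise (f := fun p => f p.1) (t := t)
        (fun p hp => hf _ (mem_product.1 (mem_filter.1 hp).1).1)]
      congr 1
      refine sum_congr rfl fun b _ => ?_
      rw [sq, ← card_product]
      congr 1
      ext ⟨x, y⟩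
      simp only [mem_product, mem_filter]
      constructor
      · rintro ⟨⟨hx, rfl⟩, hy, hyb⟩
        exact ⟨⟨⟨hx, hy⟩, hyb.symm⟩, rfl⟩
      · rintro ⟨⟨⟨hx, hy⟩, hxy⟩, rfl⟩
        exact ⟨⟨hx, rfl⟩, hy, hxy.symm⟩

namespace SimpleGraph

variable {V : Type*} [Fintype V] (G : SimpleGraph V) [DecidableRel G.Adj]

theorem ncard_setOf_mem_edgeSet_and (P : Sym2 V → Prop) [DecidablePred P] :
    {e | e ∈ G.edgeSet ∧ P e}.ncard = #{e ∈ G.edgeFinset | P e} := by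
  rw [← Set.ncard_coe_finset]
  congr 1
  ext e
  simp

variable [DecidableEq V] in
theorem card_filter_dart_edge (P : Sym2 V → Prop) [DecidablePred P] :
    #{d : G.Dart | P d.edge} = 2 * #{e ∈ G.edgeFinset | P e} := by
  rw [card_eq_sum_card_fiberwise (f := Dart.edge) (t := {e ∈ G.edgeFinset | P e})
    (fun d hd => mem_filter.2 ⟨G.mem_edgeFinset.2 d.edge_mem, (mem_filter.1 hd).2⟩), mul_comm,
    ← smul_eq_mul, ← sum_const]
  refine sum_congr rfl fun e he => ?_
  rw [mem_filter, mem_edgeFinset] at he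
  rw [filter_filter, ← G.dart_edge_fiber_card e he.1]
  congr 1
  ext d
  simp only [mem_filter, mem_univ, true_and, and_iff_right_iff_imp]
  rintro rfl
  exact he.2

variable (c : Sym2 V → Fin 3)

def rainbowTriples : Finset (G.Dart × V) :=
  {x | c x.1.edge = 0 ∧ G.Adj x.1.snd x.2 ∧ G.Adj x.1.fst x.2 ∧
    c s(x.1.snd, x.2) = 1 ∧ c s(x.1.fst, x.2) = 2}

variable {G c}

theorem mem_rainbowTriples {x : G.Dart × V} : x ∈ G.rainbowTriples c ↔
    c s(x.1.fst, x.1.snd) = 0 ∧ G.Adj x.1.snd x.2 ∧ G.Adj x.1.fst x.2 ∧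
      c s(x.1.snd, x.2) = 1 ∧ c s(x.1.fst, x.2) = 2 := by
  rw [rainbowTriples, mem_filter_univ, Dart.edge]

variable [DecidableEq V]

theorem exists_mem_rainbowTriples_of_red {a b d : V} (hab : G.Adj a b) (hbd : G.Adj b d)
    (had : G.Adj a d) (hr : c s(a, b) = 0) (hbd0 : c s(b, d) ≠ 0) (had0 : c s(a, d) ≠ 0)
    (hne : c s(b, d) ≠ c s(a, d)) :
    ∃ x ∈ G.rainbowTriples c, ({x.1.fst, x.1.snd, x.2} : Finset V) = {a, b, d} := by
  by_cases hg : c s(b, d) = 1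
  · exact ⟨(⟨(a, b), hab⟩, d),
      mem_rainbowTriples.2 ⟨hr, hbd, had, hg, by dsimp only; omega⟩, rfl⟩
  · refine ⟨(⟨(b, a), hab.symm⟩, d), mem_rainbowTriples.2 ⟨?_, had, hbd, ?_, ?_⟩,
      insert_comm _ _ _⟩ <;> dsimp only
    · rwa [Sym2.eq_swap]
    · omega
    · omega

theorem exists_mem_rainbowTriples_of_rainbow {t : Finset V} (ht : Rainbow G c t) :
    ∃ x ∈ G.rainbowTriples c, {x.1.fst, x.1.snd, x.2} = t := by
  obtain ⟨a, b, d, rfl, hab, hbd, had, h₁, h₂, h₃⟩ := ht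
  rcases (by omega : c s(a, b) = 0 ∨ c s(b, d) = 0 ∨ c s(a, d) = 0) with hr | hr | hr
  · exact exists_mem_rainbowTriples_of_red hab hbd had hr (by omega) (by omega) h₂
  · have hswap : s(d, a) = s(a, d) ∧ s(b, a) = s(a, b) := ⟨Sym2.eq_swap, Sym2.eq_swap⟩
    obtain ⟨x, hx, hxt⟩ := exists_mem_rainbowTriples_of_red hbd had.symm hab.symm hr
      (by rw [hswap.1]; omega) (by rw [hswap.2]; omega) (by rw [hswap.1, hswap.2]; omega)
    exact ⟨x, hx, by rw [hxt, pair_comm, insert_comm]⟩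
  · obtain ⟨x, hx, hxt⟩ := exists_mem_rainbowTriples_of_red had hbd.symm hab hr
      (by rw [Sym2.eq_swap]; omega) (by omega) (by rw [Sym2.eq_swap]; omega)
    exact ⟨x, hx, by rw [hxt, pair_comm]⟩

theorem rainbowTriples_injOn :
    Set.InjOn (fun x : G.Dart × V => ({x.1.fst, x.1.snd, x.2} : Finset V))
      (G.rainbowTriples c) := by
  rintro ⟨⟨⟨a, b⟩, hab⟩, d⟩ hx ⟨⟨⟨a', b'⟩, hab'⟩, d'⟩ hy hxy
  simp only [mem_coe, mem_rainbowTriples] at hx hy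
  have hmem : ∀ v ∈ ({a', b', d'} : Finset V), v = a ∨ v = b ∨ v = d := fun v hv => by
    simpa [← hxy] using hv
  have := hab.ne; have := hx.2.1.ne; have := hx.2.2.1.ne
  have := hab'.ne; have := hy.2.1.ne; have := hy.2.2.1.ne
  rcases hmem a' (by simp) with rfl | rfl | rfl <;>
    rcases hmem b' (by simp) with rfl | rfl | rfl <;>
    rcases hmem d' (by simp) with rfl | rfl | rfl <;> simp_all [Sym2.eq_swap]

theorem ncard_rainbow_eq_card_rainbowTriples :
    {t | Rainbow G c t}.ncard = #(G.rainbowTriples c) := by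
  have himage : {t | Rainbow G c t} =
      (fun x : G.Dart × V => ({x.1.fst, x.1.snd, x.2} : Finset V)) '' G.rainbowTriples c := by
    ext t
    refine ⟨fun ht => ?_, ?_⟩
    · obtain ⟨x, hx, rfl⟩ := exists_mem_rainbowTriples_of_rainbow ht
      exact ⟨x, hx, rfl⟩
    · rintro ⟨x, hx, rfl⟩
      obtain ⟨hr, hbv, hav, hg, hb⟩ := mem_rainbowTriples.1 hx
      exact ⟨x.1.fst, x.1.snd, x.2, rfl, x.1.adj, hbv, hav, by simp [hr, hg], by simp [hg, hb],
        by simp [hr, hb]⟩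
  rw [himage, rainbowTriples_injOn.ncard_image, Set.ncard_coe_finset]

theorem card_rainbowTriples_pairs_le :
    #{p ∈ G.rainbowTriples c ×ˢ G.rainbowTriples c | p.1.1 = p.2.1} ≤
      #{e ∈ G.edgeFinset | c e = 1} * #{e ∈ G.edgeFinset | c e = 2} := by
  rw [← card_product]
  -- The colours tell which endpoint of the green edge is `b` and which of the blue edge is `a`.
  refine card_le_card_of_injOn (fun p => (s(p.1.1.snd, p.1.2), s(p.2.1.fst, p.2.2))) ?_ ?_
  · rintro ⟨x, y⟩ hp
    simp only [coe_filter, mem_product, mem_rainbowTriples, Set.mem_ofPred_eq] at hp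
    simp only [coe_product, coe_filter, Set.mem_prod, Set.mem_ofPred_eq, mem_edgeFinset,
      mem_edgeSet]
    obtain ⟨⟨⟨-, hbv, -, hg, -⟩, -, -, ha'w, -, hb⟩, -⟩ := hp
    exact ⟨⟨hbv, hg⟩, ha'w, hb⟩
  · rintro ⟨⟨⟨⟨a, b⟩, hab⟩, v⟩, ⟨⟨⟨a₁, b₁⟩, hab₁⟩, v₁⟩⟩ hp
      ⟨⟨⟨⟨a', b'⟩, hab'⟩, w⟩, ⟨⟨⟨a'₁, b'₁⟩, hab'₁⟩, w₁⟩⟩ hq hpq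
    simp only [coe_filter, mem_product, mem_rainbowTriples, Set.mem_ofPred_eq, Prod.mk.injEq,
      Dart.mk.injEq] at hp hq hpq
    obtain ⟨⟨⟨hr, -, -, hg, hb⟩, hr₁, -, -, hg₁, hb₁⟩, rfl, rfl⟩ := hp
    obtain ⟨⟨⟨hr', -, -, hg', hb'⟩, hr'₁, -, -, hg'₁, hb'₁⟩, rfl, rfl⟩ := hq
    simp only [Sym2.eq_iff] at hpq
    obtain ⟨⟨rfl, rfl⟩ | ⟨rfl, rfl⟩, ⟨rfl, rfl⟩ | ⟨rfl, rfl⟩⟩ := hpq <;>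
      simp_all [Sym2.eq_swap]

end SimpleGraph

open SimpleGraph in
theorem rainbow_triangle_bound {V : Type*} [Fintype V] [DecidableEq V]
    (G : SimpleGraph V) (c : Sym2 V → Fin 3) (R Gr B T : ℕ)
    (hR : R = {e | e ∈ G.edgeSet ∧ c e = 0}.ncard)
    (hG : Gr = {e | e ∈ G.edgeSet ∧ c e = 1}.ncard)
    (hB : B = {e | e ∈ G.edgeSet ∧ c e = 2}.ncard)
    (hT : T = {t : Finset V | Rainbow G c t}.ncard) :
    T ^ 2 ≤ 2 * R * Gr * B := by
  classical
  rw [hT, G.ncard_rainbow_eq_card_rainbowTriples, hR, hG, hB, G.ncard_setOf_mem_edgeSet_and,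
    G.ncard_setOf_mem_edgeSet_and, G.ncard_setOf_mem_edgeSet_and, ← G.card_filter_dart_edge,
    mul_assoc _ _ #{e ∈ G.edgeFinset | c e = 2}]
  calc #(G.rainbowTriples c) ^ 2
      ≤ #{d : G.Dart | c d.edge = 0} *
          #{p ∈ G.rainbowTriples c ×ˢ G.rainbowTriples c | p.1.1 = p.2.1} :=
        card_sq_le_card_mul_card_filter_product_eq fun x hx =>
          (mem_filter_univ _).2 (mem_rainbowTriples.1 hx).1
    _ ≤ _ := Nat.mul_le_mul_left _ card_rainbowTriples_pairs_le
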